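/- Optimin points are invariant under positive affine transformations of the utilities: let I be a finite nonempty set of players with nonempty strategy sets S i and bounded utility functions u i : (Π j, S j) → ℝ, and for each i let α i > 0 and β i ∈ ℝ and set û i = α i · u i + β i. Then a profile p̄ is an optimin point of the game with utilities (u i) if and only if p̄ is an optimin point of the game with utilities (û i). -/

import Mathlib

/-- The deviation set `B₋ᵢ p`. -/
def Dev {I : Type*} [DecidableEq I] {S : I → Type*}
    (u : ∀ i : I, (∀ j, S j) → ℝ) (i : I) (p : ∀ j, S j) : Set (∀ j, S j) :=
  {q | q i = p i ∧ ∀ j, j ≠ i → (q j = p j ∨ u j (Function.update p j (q j)) > u j p)}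

/-- The value of a profile `p` to player `i`. -/
noncomputable def val {I : Type*} [DecidableEq I] {S : I → Type*}
    (u : ∀ i : I, (∀ j, S j) → ℝ) (i : I) (p : ∀ j, S j) : ℝ :=
  sInf (u i '' Dev u i p)

/-- `pbar` is an optimin point: its value vector is Pareto optimal. -/
def IsOptimin {I : Type*} [DecidableEq I] {S : I → Type*}
    (u : ∀ i : I, (∀ j, S j) → ℝ) (pbar : ∀ j, S j) : Prop :=
  ¬ ∃ p : ∀ j, S j, (∀ i, val u i pbar ≤ val u i p) ∧ ∃ j, val u j pbar < val u j p

/-! Deviation sets only compare utilities, so they are unchanged by strictly increasing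
transformations of the utilities; continuity moreover lets such a transformation commute with the
infimum defining the value. Hence values transform coordinatewise by strictly increasing maps, which
preserve Pareto optimality. -/

section StrictMonoTransform

variable {I : Type*} [DecidableEq I] {S : I → Type*} (u : I → (∀ j, S j) → ℝ)
  {f : I → ℝ → ℝ}

theorem self_mem_Dev (i : I) (p : ∀ j, S j) : p ∈ Dev u i p :=
  ⟨rfl, fun _ _ => Or.inl rfl⟩

theorem Dev_comp_of_strictMono (hf : ∀ i, StrictMono (f i)) (i : I) (p : ∀ j, S j) :
    Dev (fun i p => f i (u i p)) i p = Dev u i p := by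
  ext q
  simp only [Dev, gt_iff_lt, (hf _).lt_iff_lt]

theorem val_comp_of_strictMono (hf : ∀ i, StrictMono (f i)) (hfc : ∀ i, Continuous (f i))
    {i : I} (hu : BddBelow (Set.range (u i))) (p : ∀ j, S j) :
    val (fun i p => f i (u i p)) i p = f i (val u i p) := by
  have hne : (u i '' Dev u i p).Nonempty := ⟨u i p, p, self_mem_Dev u i p, rfl⟩
  have hbdd : BddBelow (u i '' Dev u i p) := hu.mono (Set.image_subset_range _ _)
  rw [val, val, Dev_comp_of_strictMono u hf, ← Set.image_image (f i),
    (hf i).monotone.map_csInf_of_continuousAt (hfc i).continuousAt hne hbdd]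

theorem isOptimin_comp_iff_of_strictMono (hf : ∀ i, StrictMono (f i))
    (hfc : ∀ i, Continuous (f i)) (hu : ∀ i, BddBelow (Set.range (u i))) (pbar : ∀ j, S j) :
    IsOptimin (fun i p => f i (u i p)) pbar ↔ IsOptimin u pbar := by
  simp only [IsOptimin, val_comp_of_strictMono u hf hfc (hu _), (hf _).le_iff_le,
    (hf _).lt_iff_lt]

end StrictMonoTransform

theorem optimin_invariant_affine_general {I : Type*} [DecidableEq I]
    {S : I → Type*}
    (u : ∀ i : I, (∀ j, S j) → ℝ) (hb : ∀ i, ∃ C : ℝ, ∀ p, |u i p| ≤ C)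
    (α β : I → ℝ) (hα : ∀ i, 0 < α i) (pbar : ∀ j, S j) :
    IsOptimin u pbar ↔ IsOptimin (fun i p => α i * u i p + β i) pbar := by
  have hu : ∀ i, BddBelow (Set.range (u i)) := fun i => by
    obtain ⟨C, hC⟩ := hb i
    exact ⟨-C, Set.forall_mem_range.2 fun p => neg_le_of_abs_le (hC p)⟩
  have hf : ∀ i, StrictMono (fun x : ℝ => α i * x + β i) := fun i _ _ hxy => by
    simpa using mul_lt_mul_of_pos_left hxy (hα i)
  exact (isOptimin_comp_iff_of_strictMono u hf (fun _ => by fun_prop) hu pbar).symm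

/-- Optimin points are invariant under positive affine transformations of the utilities. -/
theorem optimin_invariant_affine {I : Type*} [Fintype I] [Nonempty I] [DecidableEq I]
    {S : I → Type*} [∀ i, Nonempty (S i)]
    (u : ∀ i : I, (∀ j, S j) → ℝ) (hb : ∀ i, ∃ C : ℝ, ∀ p, |u i p| ≤ C)
    (α β : I → ℝ) (hα : ∀ i, 0 < α i) (pbar : ∀ j, S j) :
    IsOptimin u pbar ↔ IsOptimin (fun i p => α i * u i p + β i) pbar :=
  optimin_invariant_affine_general u hb α β hα pbar
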